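/- Let M be a closed oriented d-manifold, and let t ∈ C^d(D_TM, S_TM) be a cochain representing the Thom class of the tangent disk bundle which vanishes on chains lying in S_TM and on degenerate simplices. Then for any singular p-simplex σ in the pullback disk bundle D_LM over LM (p ≥ d) lying in filtration F_p of the Serre filtration associated to the fibration ev : D_LM → D_TM, the cap product σ ∩ ev*(t) lies in filtration F_{p−d}. Consequently capping with the Thom class induces a map of filtered chain complexes F_p(C_*(D_LM, S_LM)) → F_{p−d}(C_*(D_LM)) lowering the Serre filtration by exactly d. -/

import Mathlib

open CategoryTheory

/-! ## Singular homology with integer coefficients -/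

/-- The singular chain complex functor with integer coefficients: the free simplicial
`ℤ`-module on the singular simplicial set, made into a chain complex via alternating
face maps. -/
noncomputable def singularChainsFunctor : TopCat ⥤ ChainComplex (ModuleCat ℤ) ℕ :=
  TopCat.toSSet ⋙ ((SimplicialObject.whiskering _ _).obj (ModuleCat.free ℤ)) ⋙
    AlgebraicTopology.alternatingFaceMapComplex (ModuleCat ℤ)

/-- The singular chain complex of a space. -/
noncomputable def singularChains (X : TopCat) : ChainComplex (ModuleCat ℤ) ℕ :=
  singularChainsFunctor.obj X

/-- Singular homology with integer coefficients, as a functor. -/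
noncomputable def SHfunctor (n : ℕ) : TopCat ⥤ ModuleCat ℤ :=
  singularChainsFunctor ⋙ HomologicalComplex.homologyFunctor _ _ n

/-- `SH n X` : the `n`-th singular homology group `H_n(X; ℤ)`. -/
noncomputable def SH (n : ℕ) (X : TopCat) : ModuleCat ℤ := (SHfunctor n).obj X

/-- The map induced on singular homology by a continuous map. -/
noncomputable def SHmap (n : ℕ) {X Y : TopCat} (f : X ⟶ Y) : SH n X ⟶ SH n Y :=
  (SHfunctor n).map f

/-- Transport of the homology grading along an equality of degrees. -/
noncomputable def SHcast {m n : ℕ} (X : TopCat) (h : m = n) : SH m X ≃ₗ[ℤ] SH n X := by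
  subst h; exact LinearEquiv.refl ℤ (SH m X)

/-- A singular `n`-simplex of `X`, i.e. a continuous map `Δⁿ → X`. -/
abbrev SingularSimplex (X : TopCat) (n : ℕ) : Type :=
  (TopCat.toSSet.obj X).obj (Opposite.op (SimplexCategory.mk n))

/-- The constant singular `0`-simplex at a point. -/
noncomputable def constSimplex (X : TopCat) (x : X) : SingularSimplex X 0 :=
  ULift.up (TopCat.ofHom (ContinuousMap.const _ x))

/-- The `0`-chain given by the constant `0`-simplex at a point. -/
noncomputable def pointChain (X : TopCat) (x : X) : ((singularChains X).X 0) := by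
  exact Finsupp.single (constSimplex X x) 1

/-- The homology class in `H_0(X; ℤ)` of a point. -/
noncomputable def pointClass (X : TopCat) (x : X) : SH 0 X :=
  (show ModuleCat.of ℤ ℤ ⟶ SH 0 X from CategoryStruct.comp
    ((singularChains X).liftCycles
      (ModuleCat.ofHom (LinearMap.toSpanSingleton ℤ _ (pointChain X x)) :
        ModuleCat.of ℤ ℤ ⟶ (singularChains X).X 0)
      0 (by simp) (by
        rw [(singularChains X).shape 0 0 (by simp)]
        exact Limits.comp_zero))
    ((singularChains X).homologyπ 0)) (1 : ℤ)

/-- The product of two continuous maps, as a morphism between product spaces in `TopCat`. -/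
def prodHom {X X' Y Y' : TopCat} (f : X ⟶ X') (g : Y ⟶ Y') :
    TopCat.of (X × Y) ⟶ TopCat.of (X' × Y') :=
  TopCat.ofHom (ContinuousMap.prodMap f.hom g.hom)

/-- A homology cross product: a natural bilinear pairing
`H_p(X) ⊗ H_q(Y) → H_{p+q}(X × Y)` normalized on points, such as the one induced by the
Eilenberg-Zilber (shuffle) chain map. -/
structure CrossProduct : Type 1 where
  cross : ∀ (p q : ℕ) (X Y : TopCat), SH p X →ₗ[ℤ] SH q Y →ₗ[ℤ] SH (p + q) (TopCat.of (X × Y))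
  naturality : ∀ (p q : ℕ) {X X' Y Y' : TopCat} (f : X ⟶ X') (g : Y ⟶ Y')
      (a : SH p X) (b : SH q Y),
      SHmap (p + q) (prodHom f g) (cross p q X Y a b)
        = cross p q X' Y' (SHmap p f a) (SHmap q g b)
  cross_point : ∀ (X Y : TopCat) (x : X) (y : Y),
      cross 0 0 X Y (pointClass X x) (pointClass Y y)
        = SHcast (TopCat.of (X × Y)) (show (0 : ℕ) = 0 + 0 from rfl)
            (pointClass (TopCat.of (X × Y)) (x, y))

/-! ## Loop spaces and the Pontryagin and Chas-Sullivan products -/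

/-- The based loop space of `X` at `x`, as an object of `TopCat`. -/
noncomputable def Loops (X : TopCat) (x : X) : TopCat := TopCat.of (Path x x)

/-- Loop concatenation (traverse the first loop, then the second), as a continuous map. -/
noncomputable def loopConcat {X : TopCat} (x : X) :
    TopCat.of (Path x x × Path x x) ⟶ Loops X x :=
  TopCat.ofHom ⟨fun p => p.1.trans p.2, Path.continuous_trans⟩

/-- The Pontryagin product on the singular homology of the based loop space: the pairing
induced by loop concatenation together with a homology cross product. -/
noncomputable def pontryagin (χ : CrossProduct) {X : TopCat} (x : X) (p q : ℕ)
    (a : SH p (Loops X x)) (b : SH q (Loops X x)) : SH (p + q) (Loops X x) :=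
  SHmap (p + q) (loopConcat x) (χ.cross p q (Loops X x) (Loops X x) a b)

/-- The free loop space `LX = Map(S¹, X)` with the compact-open topology. -/
noncomputable def FreeLoops (X : TopCat) : TopCat := TopCat.of C(Circle, X)

/-- Evaluation of a free loop at the base point `1 ∈ S¹`. -/
noncomputable def loopEval (X : TopCat) : FreeLoops X ⟶ X :=
  TopCat.ofHom <| show C(C(Circle, X), X) from ⟨fun f => f 1, ContinuousEvalConst.continuous_eval_const 1⟩

/-- An algebra structure of Chas-Sullivan type on the loop homology
`ℍ_*(LM) = H_{*+d}(LM; ℤ)` of a closed oriented `d`-manifold `M`: a graded-commutative,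
associative product `ℍ_p ⊗ ℍ_q → ℍ_{p+q}` with unit in `ℍ_0 = H_d(LM)`.  Written on the
underlying singular homology of the free loop space it takes `H_p ⊗ H_q → H_{p+q-d}`. -/
structure LoopProduct (M : TopCat) (d : ℕ) : Type 1 where
  mul : ∀ (p q r : ℕ), p + q = d + r →
    SH p (FreeLoops M) →ₗ[ℤ] SH q (FreeLoops M) →ₗ[ℤ] SH r (FreeLoops M)
  one : SH d (FreeLoops M)
  one_mul : ∀ (p : ℕ) (a : SH p (FreeLoops M)), mul d p p rfl one a = a
  mul_one : ∀ (p : ℕ) (a : SH p (FreeLoops M)), mul p d p (by ring) a one = a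
  mul_assoc : ∀ (p q r s t u : ℕ) (h1 : p + q = d + s) (h2 : s + r = d + t)
      (h3 : q + r = d + u) (h4 : p + u = d + t)
      (a : SH p (FreeLoops M)) (b : SH q (FreeLoops M)) (c : SH r (FreeLoops M)),
      mul s r t h2 (mul p q s h1 a b) c = mul p u t h4 a (mul q r u h3 b c)
  mul_comm : ∀ (p q r : ℕ) (h : p + q = d + r) (h' : q + p = d + r)
      (a : SH p (FreeLoops M)) (b : SH q (FreeLoops M)),
      mul p q r h a b
        = ((-1 : ℤ) ^ (((p : ℤ) - d) * ((q : ℤ) - d)).toNat) • mul q p r h' b a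

/-- The span of the images of the monomials of weighted degree `j` under a ring map out of a
polynomial ring; used to express gradings on polynomial rings and their quotients. -/
noncomputable def MonPiece {k : ℕ} {R : Type} [CommRing R]
    (f : MvPolynomial (Fin k) ℤ →+* R) (w : Fin k → ℤ) (j : ℤ) : Submodule ℤ R :=
  Submodule.span ℤ
    {x : R | ∃ s : Fin k →₀ ℕ, (∑ i, (s i : ℤ) * w i) = j ∧ x = f (MvPolynomial.monomial s 1)}

/-- Complex projective `n`-space, topologized as a quotient of `ℂ^{n+1} \ {0}`. -/
noncomputable instance CPtop (n : ℕ) : TopologicalSpace (Projectivization ℂ (Fin (n+1) → ℂ)) :=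
  inferInstanceAs (TopologicalSpace (_root_.Quotient (projectivizationSetoid ℂ (Fin (n+1) → ℂ))))

/-- Complex projective `n`-space `ℂPⁿ` as an object of `TopCat`. -/
noncomputable def CP (n : ℕ) : TopCat := TopCat.of (Projectivization ℂ (Fin (n+1) → ℂ))

/-- A base point of `ℂPⁿ`. -/
noncomputable def CPbase (n : ℕ) : CP n :=
  Projectivization.mk ℂ (Pi.single 0 1) (by
    intro h
    simpa using congrFun h 0)

/-! ## The Serre filtration on singular chains -/

/-- The "front face" inclusion `Δᵐ → Δʳ` (the affine map sending vertex `k` to vertex `k`). -/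
def frontFace (m r : ℕ) (h : m ≤ r) : SimplexCategory.mk m ⟶ SimplexCategory.mk r :=
  SimplexCategory.mkHom
    ⟨fun i => ⟨i.1, by have := i.isLt; omega⟩,
     fun a b hab => by simp only [Fin.mk_le_mk]; exact Fin.le_def.mp hab⟩

/-- The "back face" inclusion `Δᵐ → Δʳ` (the affine map sending vertex `k` to `k + (r-m)`). -/
def backFace (m r : ℕ) (h : m ≤ r) : SimplexCategory.mk m ⟶ SimplexCategory.mk r :=
  SimplexCategory.mkHom
    ⟨fun i => ⟨i.1 + (r - m), by have := i.isLt; omega⟩,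
     fun a b hab => by
       simp only [Fin.mk_le_mk]
       exact Nat.add_le_add_right (Fin.le_def.mp hab) _⟩

/-- A singular simplex `T : Δʳ → E` lies in the `p`-th stage of the Serre filtration of the
map `π : E → B` if `π ∘ T = σ(i₀, …, i_r)` for some singular `q`-simplex `σ` of `B` with
`q ≤ p` and some nondecreasing vertex map `(i₀, …, i_r) : Δʳ → Δ^q`. -/
def InSerreFil {E B : TopCat} (π : E ⟶ B) (p : ℕ) {r : ℕ} (T : SingularSimplex E r) : Prop :=
  ∃ q : ℕ, q ≤ p ∧ ∃ (σ : SingularSimplex B q) (f : SimplexCategory.mk r ⟶ SimplexCategory.mk q),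
    (TopCat.toSSet.map π).app (Opposite.op (SimplexCategory.mk r)) T
      = (TopCat.toSSet.obj B).map f.op σ

/-- The `p`-th stage `F_p(C_r(E))` of the Serre filtration of the singular chain complex:
the span of the singular simplices lying in filtration `p`. -/
noncomputable def SerreFilSub {E B : TopCat} (π : E ⟶ B) (p r : ℕ) :
    Submodule ℤ ((singularChains E).X r) := by
  exact Finsupp.supported ℤ ℤ {T : SingularSimplex E r | InSerreFil π p T}

/-- A map is a Serre fibration if it has the homotopy lifting property with respect to all
cubes `[0,1]ⁿ`. -/
def IsSerreFibration {E B : TopCat} (π : E ⟶ B) : Prop :=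
  ∀ (n : ℕ) (H : C((Fin n → unitInterval) × unitInterval, B))
    (h : C(Fin n → unitInterval, E)),
    (∀ y, π (h y) = H (y, 0)) →
    ∃ H' : C((Fin n → unitInterval) × unitInterval, E),
      (∀ z, π (H' z) = H z) ∧ (∀ y, H' (y, 0) = h y)

/-- The chain-level "cap product with the pulled-back Thom cochain `ev^* t`":
on a singular `r`-simplex `σ` of the total space it is
`σ ∩ ev^*(t) = (-1)^{d(r-d)} t(ev ∘ (back d-face of σ)) • (front (r-d)-face of σ)`. -/
noncomputable def capThom {DL DT : TopCat} (ev : DL ⟶ DT) (d : ℕ)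
    (t : SingularSimplex DT d → ℤ) (r : ℕ) (h : d ≤ r) :
    ((singularChains DL).X r) →ₗ[ℤ] ((singularChains DL).X (r - d)) := by
  exact Finsupp.lsum ℕ (fun T : SingularSimplex DL r =>
    LinearMap.toSpanSingleton ℤ _
      (((-1 : ℤ) ^ (d * (r - d))) •
        Finsupp.single
          ((TopCat.toSSet.obj DL).map (frontFace (r - d) r (by omega)).op T)
          (t ((TopCat.toSSet.map ev).app _
            ((TopCat.toSSet.obj DL).map (backFace d r h).op T)))))


/-- Key lemma: the single summand produced by `capThom` on a simplex `T` in Serre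
filtration `p` lies in Serre filtration `p - d`. -/
lemma capThom_single_mem {DL DT : TopCat} (ev : DL ⟶ DT) (d : ℕ)
    (t : SingularSimplex DT d → ℤ)
    (ht_degen : ∀ (q : ℕ), q < d → ∀ (g : SimplexCategory.mk d ⟶ SimplexCategory.mk q)
      (τ : SingularSimplex DT q), t ((TopCat.toSSet.obj DT).map g.op τ) = 0)
    (r p : ℕ) (hdr : d ≤ r) (hdp : d ≤ p) (hfr : r - d ≤ r)
    (T : SingularSimplex DL r) (hT : InSerreFil ev p T) :
    (Finsupp.single
        ((TopCat.toSSet.obj DL).map (frontFace (r - d) r hfr).op T)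
        (t ((TopCat.toSSet.map ev).app _
          ((TopCat.toSSet.obj DL).map (backFace d r hdr).op T)))
      : (singularChains DL).X (r - d)) ∈ SerreFilSub ev (p - d) (r - d) := by
  obtain ⟨q, hq, σ, f, hπ⟩ := hT
  have hv : r - d < r + 1 := by omega
  set m : ℕ := (f.toOrderHom ⟨r - d, hv⟩).val with hm
  have hmq : m ≤ q := Nat.lt_succ_iff.mp (f.toOrderHom ⟨r - d, hv⟩).isLt
  -- naturality helper
  have nat : ∀ (s : ℕ) (h : SimplexCategory.mk s ⟶ SimplexCategory.mk r),
      (TopCat.toSSet.map ev).app (Opposite.op (SimplexCategory.mk s))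
        ((TopCat.toSSet.obj DL).map h.op T)
      = (TopCat.toSSet.obj DT).map (h ≫ f).op σ := by
    intro s h
    have := FunctorToTypes.naturality (φ := TopCat.toSSet.map ev) (f := h.op) (x := T)
    rw [this, hπ, ← FunctorToTypes.map_comp_apply, ← op_comp]
  by_cases hcase : m + d ≤ q
  · -- the last `d` vertices of `f` are spread out: membership in filtration `p - d`
    apply Finsupp.single_mem_supported
    refine ⟨m, by omega,
      (TopCat.toSSet.obj DT).map (frontFace m q (by omega)).op σ,
      SimplexCategory.mkHom
        ⟨fun i => ⟨(f.toOrderHom ((frontFace (r - d) r hfr).toOrderHom i)).val, ?_⟩, ?_⟩, ?_⟩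
    · -- f(i) ≤ m for i ≤ r - d
      have hle : (f.toOrderHom ((frontFace (r - d) r hfr).toOrderHom i)).val
          ≤ (f.toOrderHom ⟨r - d, hv⟩).val := by
        refine Fin.le_def.mp (f.toOrderHom.monotone ?_)
        rw [Fin.le_def]
        exact show i.1 ≤ r - d by
          have := i.isLt
          omega
      simp only [SimplexCategory.len_mk]
      omega
    · intro a b hab
      simp only [Fin.mk_le_mk]
      exact Fin.le_def.mp
        (f.toOrderHom.monotone ((frontFace (r - d) r hfr).toOrderHom.monotone hab))
    · rw [nat (r - d) (frontFace (r - d) r hfr), ← FunctorToTypes.map_comp_apply, ← op_comp]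
      rfl
  · -- the last `d` vertices of `f` are crowded: the Thom cochain vanishes
    have hz : t ((TopCat.toSSet.map ev).app _
        ((TopCat.toSSet.obj DL).map (backFace d r hdr).op T)) = 0 := by
      rw [nat d (backFace d r hdr)]
      have hmono : ∀ i : Fin (d + 1), (f.toOrderHom ⟨r - d, hv⟩).val
          ≤ (f.toOrderHom ((backFace d r hdr).toOrderHom i)).val := by
        intro i
        refine Fin.le_def.mp (f.toOrderHom.monotone ?_)
        rw [Fin.le_def]
        exact show r - d ≤ i.1 + (r - d) by omega
      have hlt : ∀ i : Fin (d + 1),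
          (f.toOrderHom ((backFace d r hdr).toOrderHom i)).val < q + 1 := fun i =>
        (f.toOrderHom ((backFace d r hdr).toOrderHom i)).isLt
      have hfac : backFace d r hdr ≫ f
          = (SimplexCategory.mkHom
              ⟨fun i => ⟨(f.toOrderHom ((backFace d r hdr).toOrderHom i)).val - m, by
                have := hlt i
                simp only [SimplexCategory.len_mk]
                omega⟩, by
                intro a b hab
                simp only [Fin.mk_le_mk]
                have := Fin.le_def.mp
                  (f.toOrderHom.monotone ((backFace d r hdr).toOrderHom.monotone hab))
                omega⟩ : SimplexCategory.mk d ⟶ SimplexCategory.mk (q - m))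
            ≫ backFace (q - m) q (Nat.sub_le q m) := by
        apply SimplexCategory.Hom.ext
        apply OrderHom.ext
        funext i
        apply Fin.ext
        show (f.toOrderHom ((backFace d r hdr).toOrderHom i)).val
          = ((f.toOrderHom ((backFace d r hdr).toOrderHom i)).val - m) + (q - (q - m))
        have h1 := hmono i
        have h2 := hlt i
        omega
      rw [hfac, op_comp, FunctorToTypes.map_comp_apply]
      exact ht_degen (q - m) (by omega) _ _
    rw [hz, Finsupp.single_zero]
    exact Submodule.zero_mem _

/-- Let `ev : D_LM → D_TM` be the evaluation map from the pulled-back disk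
bundle over the free loop space to the disk bundle of the tangent bundle of a closed oriented
`d`-manifold (here abstracted as any continuous map `ev : DL → DT`), and let
`t ∈ C^d(D_TM, S_TM)` be a cochain representing the Thom class which vanishes on chains
lying in the sphere bundle `S_TM ⊆ D_TM` and on degenerate simplices.  Then capping with
`ev^*(t)` maps the Serre filtration `F_p(C_r(D_LM))` of the fibration `ev` into
`F_{p-d}(C_{r-d}(D_LM))`, i.e. it lowers the Serre filtration by exactly `d`. -/
theorem cap_with_thom_class_lowers_serre_filtration
    {DL DT : TopCat} (ev : DL ⟶ DT) (SL : Set DT) (d : ℕ)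
    (t : SingularSimplex DT d → ℤ)
    (ht_sphere : ∀ σ : SingularSimplex DT d,
      Set.range (show C((SimplexCategory.toTop.obj (SimplexCategory.mk d)), DT) from σ.down.hom) ⊆ SL →
        t σ = 0)
    (ht_degen : ∀ (q : ℕ), q < d → ∀ (g : SimplexCategory.mk d ⟶ SimplexCategory.mk q)
      (τ : SingularSimplex DT q), t ((TopCat.toSSet.obj DT).map g.op τ) = 0)
    (r p : ℕ) (hdr : d ≤ r) (hdp : d ≤ p)
    (c : (singularChains DL).X r) (hc : c ∈ SerreFilSub ev p r) :
    capThom ev d t r hdr c ∈ SerreFilSub ev (p - d) (r - d) := by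
  classical
  have hrw : capThom ev d t r hdr c
      = c.sum fun T a => a • (((-1 : ℤ) ^ (d * (r - d))) •
          Finsupp.single
            ((TopCat.toSSet.obj DL).map (frontFace (r - d) r (by omega)).op T)
            (t ((TopCat.toSSet.map ev).app _
              ((TopCat.toSSet.obj DL).map (backFace d r hdr).op T)))) := by
    simp only [capThom, Finsupp.lsum_apply]
    rfl
  rw [hrw]
  apply Submodule.finsuppSum_mem
  intro T hT
  apply Submodule.smul_mem
  apply Submodule.smul_mem
  exact capThom_single_mem ev d t ht_degen r p hdr hdp (by omega) T
    (hc (Finsupp.mem_support_iff.mpr hT))
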